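/- Let X be an affine GL-scheme with orbit space X^orb and quotient map π : X → X^orb. Then π and π^{-1} give mutually inverse bijections between the open (respectively closed) GL-stable subsets of X and the open (respectively closed) subsets of X^orb. In particular, for every closed GL-stable Z ⊆ X one has π^{-1}(π(Z)) = Z. -/
import Mathlib


open TensorProduct PiTensorProduct

noncomputable section

/-- `𝐕 = ⋃ₙ Kⁿ`, the standard representation of the infinite general linear group:
the `K`-vector space with countable basis `e 0, e 1, e 2, …`. -/
abbrev Vec (K : Type) [Field K] : Type := ℕ →₀ K

/-- The `i`-th standard basis vector of `𝐕`. -/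
def ee (K : Type) [Field K] (i : ℕ) : Vec K := Finsupp.single i 1

/-- The infinite general linear group `GL = ⋃ₙ GLₙ(K)`, realized as the set of linear
automorphisms of `𝐕` which, for some `N`, fix all basis vectors `e i` with `i ≥ N` and
preserve the span of `e 0, …, e (N-1)`. -/
def GLSet (K : Type) [Field K] : Set (Vec K ≃ₗ[K] Vec K) :=
  {g | ∃ N : ℕ,
    (∀ i, N ≤ i → g (ee K i) = ee K i ∧ g.symm (ee K i) = ee K i) ∧
    (∀ i, i < N → ((g (ee K i)).support : Set ℕ) ⊆ Set.Iio N ∧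
      ((g.symm (ee K i)).support : Set ℕ) ⊆ Set.Iio N)}

/-- The subgroup `GLₙ(K) ⊆ GL`: elements of `GL` witnessed by the given `N`. -/
def GLn (K : Type) [Field K] (N : ℕ) : Set (Vec K ≃ₗ[K] Vec K) :=
  {g | (∀ i, N ≤ i → g (ee K i) = ee K i ∧ g.symm (ee K i) = ee K i) ∧
    (∀ i, i < N → ((g (ee K i)).support : Set ℕ) ⊆ Set.Iio N ∧
      ((g.symm (ee K i)).support : Set ℕ) ⊆ Set.Iio N)}

variable (K : Type) [Field K]

/-- A `K`-module `R` with a `GL`-action (given by `act`) is a *polynomial representation*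
if it embeds `GL`-equivariantly into a direct sum of tensor powers of `𝐕`. -/
def IsPolyRep (R : Type) [AddCommGroup R] [Module K R]
    (act : (Vec K ≃ₗ[K] Vec K) → (R →ₗ[K] R)) : Prop :=
  ∃ (ι : Type) (d : ι → ℕ)
    (emb : R →ₗ[K] DirectSum ι (fun i => ⨂[K] (_j : Fin (d i)), Vec K)),
      Function.Injective emb ∧
      ∀ g ∈ GLSet K, ∀ x : R,
        emb (act g x) =
          DFinsupp.mapRange.linearMap
            (fun i => PiTensorProduct.map (fun _ : Fin (d i) => g.toLinearMap)) (emb x)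

variable (R : Type) [CommRing R] [Algebra K R]
variable (act : (Vec K ≃ₗ[K] Vec K) → (R ≃ₐ[K] R))

/-- The underlying polynomial-representation condition for the `GL`-algebra `R`. -/
def IsGLAlgebra : Prop :=
  (act 1 = AlgEquiv.refl) ∧
  (∀ g ∈ GLSet K, ∀ h ∈ GLSet K, act (g * h) = (act h).trans (act g)) ∧
  IsPolyRep K R (fun g => (act g).toLinearMap)

/-- `R` is finitely `GL`-generated. -/
def IsFinGLGen : Prop :=
  ∃ s : Finset R,
    Algebra.adjoin K (⋃ f ∈ s, {y : R | ∃ g ∈ GLSet K, y = act g f}) = ⊤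

/-- The homeomorphism of `X = Spec R` induced by `g ∈ GL`. -/
def pt (g : Vec K ≃ₗ[K] Vec K) : PrimeSpectrum R → PrimeSpectrum R :=
  PrimeSpectrum.comap (act g).toRingEquiv.toRingHom

/-- A subset of `X = Spec R` is `GL`-stable. -/
def GLStable (S : Set (PrimeSpectrum R)) : Prop :=
  ∀ g ∈ GLSet K, pt K R act g ⁻¹' S = S

/-- The orbit closure `O̅ₓ`: the smallest closed `GL`-stable subset containing `x`. -/
def orbitClosure (x : PrimeSpectrum R) : Set (PrimeSpectrum R) :=
  ⋂₀ {Z | IsClosed Z ∧ GLStable K R act Z ∧ x ∈ Z}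

/-- The generalized orbit `Oₓ` of a point. -/
def genOrbit (x : PrimeSpectrum R) : Set (PrimeSpectrum R) :=
  {y | orbitClosure K R act y = orbitClosure K R act x}

/-- `x` is a `GL`-fixed point of `X`. -/
def isFixedPt (x : PrimeSpectrum R) : Prop :=
  ∀ g ∈ GLSet K, pt K R act g x = x

/-- The setoid whose classes are the generalized orbits. -/
def orbSetoid : Setoid (PrimeSpectrum R) :=
  ⟨fun x y => orbitClosure K R act x = orbitClosure K R act y,
    ⟨fun _ => rfl, Eq.symm, Eq.trans⟩⟩

/-- The orbit space `X^orb` with the quotient topology. -/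
abbrev OrbSpace : Type := Quotient (orbSetoid K R act)

/-- The quotient map `π : X → X^orb`. -/
def orbMap (x : PrimeSpectrum R) : OrbSpace K R act :=
  Quotient.mk (orbSetoid K R act) x

end
section Aux

variable {K : Type} [Field K] {R : Type} [CommRing R] [Algebra K R]
variable {act : (Vec K ≃ₗ[K] Vec K) → (R ≃ₐ[K] R)}

lemma symm_mem_GLSet {g : Vec K ≃ₗ[K] Vec K} (hg : g ∈ GLSet K) : g.symm ∈ GLSet K := by
  obtain ⟨N, h1, h2⟩ := hg
  exact ⟨N, fun i hi => ⟨(h1 i hi).2, by simpa using (h1 i hi).1⟩,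
    fun i hi => ⟨(h2 i hi).2, by simpa using (h2 i hi).1⟩⟩

lemma pt_symm_pt (halg : IsGLAlgebra K R act) {g : Vec K ≃ₗ[K] Vec K} (hg : g ∈ GLSet K)
    (x : PrimeSpectrum R) : pt K R act g.symm (pt K R act g x) = x := by
  have hmul : g * g.symm = 1 := by
    apply LinearEquiv.ext; intro v; exact g.apply_symm_apply v
  have h := halg.2.1 g hg g.symm (symm_mem_GLSet hg)
  rw [hmul, halg.1] at h
  have hcomp : ((act g).toRingEquiv.toRingHom).comp ((act g.symm).toRingEquiv.toRingHom)
      = RingHom.id R := by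
    ext r
    have := AlgEquiv.ext_iff.1 h.symm r
    simpa using this
  show PrimeSpectrum.comap _ (PrimeSpectrum.comap _ x) = x
  rw [← PrimeSpectrum.comap_comp_apply, hcomp, PrimeSpectrum.comap_id]

lemma glstable_mem {Z : Set (PrimeSpectrum R)} (hZ : GLStable K R act Z)
    {g : Vec K ≃ₗ[K] Vec K} (hg : g ∈ GLSet K) {x : PrimeSpectrum R} (hx : x ∈ Z) :
    pt K R act g x ∈ Z := by
  have := hZ g hg
  rw [← this] at hx
  exact hx

lemma mem_orbitClosure_self (x : PrimeSpectrum R) : x ∈ orbitClosure K R act x :=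
  fun _Z hZ => hZ.2.2

lemma orbitClosure_isClosed (x : PrimeSpectrum R) : IsClosed (orbitClosure K R act x) :=
  isClosed_sInter fun _Z hZ => hZ.1

lemma orbitClosure_glstable (x : PrimeSpectrum R) : GLStable K R act (orbitClosure K R act x) := by
  intro g hg
  ext y
  simp only [Set.mem_preimage, orbitClosure, Set.mem_sInter]
  refine ⟨fun h Z hZ => ?_, fun h Z hZ => ?_⟩
  · have h' := h Z hZ
    rw [← hZ.2.1 g hg]
    exact h'
  · have h' := h Z hZ
    rw [← hZ.2.1 g hg] at h'
    exact h'

lemma orbitClosure_subset {x : PrimeSpectrum R} {Z : Set (PrimeSpectrum R)}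
    (h1 : IsClosed Z) (h2 : GLStable K R act Z) (h3 : x ∈ Z) :
    orbitClosure K R act x ⊆ Z :=
  Set.sInter_subset_of_mem ⟨h1, h2, h3⟩

lemma orbitClosure_pt (halg : IsGLAlgebra K R act) {g : Vec K ≃ₗ[K] Vec K} (hg : g ∈ GLSet K)
    (x : PrimeSpectrum R) :
    orbitClosure K R act (pt K R act g x) = orbitClosure K R act x := by
  apply le_antisymm
  · exact orbitClosure_subset (orbitClosure_isClosed x) (orbitClosure_glstable x)
      (glstable_mem (orbitClosure_glstable x) hg (mem_orbitClosure_self x))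
  · apply orbitClosure_subset (orbitClosure_isClosed _) (orbitClosure_glstable _)
    have := glstable_mem (act := act) (orbitClosure_glstable (act := act) (pt K R act g x))
      (symm_mem_GLSet hg) (mem_orbitClosure_self (act := act) (pt K R act g x))
    rwa [pt_symm_pt halg hg] at this

lemma isQuotientMap_orbMap : Topology.IsQuotientMap (orbMap K R act) :=
  isQuotientMap_quot_mk

lemma saturated_of_closed_stable {Z : Set (PrimeSpectrum R)}
    (h2 : GLStable K R act Z) (h1 : IsClosed Z) :
    orbMap K R act ⁻¹' (orbMap K R act '' Z) = Z := by
  apply Set.Subset.antisymm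
  · rintro y hy
    obtain ⟨x, hxZ, hxy⟩ := hy
    have heq : orbitClosure K R act x = orbitClosure K R act y :=
      Quotient.exact hxy
    have : y ∈ orbitClosure K R act y := mem_orbitClosure_self y
    rw [← heq] at this
    exact orbitClosure_subset h1 h2 hxZ this
  · exact Set.subset_preimage_image _ _

end Aux

/-- Let `X = Spec R` be an affine `GL`-scheme with orbit space `X^orb` and quotient map
`π : X → X^orb`.  Then `π` and `π⁻¹` give mutually inverse bijections between the open
(resp. closed) `GL`-stable subsets of `X` and the open (resp. closed) subsets of
`X^orb`; in particular `π⁻¹(π(Z)) = Z` for every closed `GL`-stable `Z ⊆ X`. -/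
theorem orbSpace_opens_closeds_correspondence
    (K : Type) [Field K] [CharZero K]
    (R : Type) [CommRing R] [Algebra K R]
    (act : (Vec K ≃ₗ[K] Vec K) → (R ≃ₐ[K] R))
    (halg : IsGLAlgebra K R act) :
    (∀ Z : Set (PrimeSpectrum R), IsClosed Z → GLStable K R act Z →
      IsClosed (orbMap K R act '' Z) ∧ orbMap K R act ⁻¹' (orbMap K R act '' Z) = Z) ∧
    (∀ C : Set (OrbSpace K R act), IsClosed C →
      IsClosed (orbMap K R act ⁻¹' C) ∧ GLStable K R act (orbMap K R act ⁻¹' C) ∧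
        orbMap K R act '' (orbMap K R act ⁻¹' C) = C) ∧
    (∀ U : Set (PrimeSpectrum R), IsOpen U → GLStable K R act U →
      IsOpen (orbMap K R act '' U) ∧ orbMap K R act ⁻¹' (orbMap K R act '' U) = U) ∧
    (∀ V : Set (OrbSpace K R act), IsOpen V →
      IsOpen (orbMap K R act ⁻¹' V) ∧ GLStable K R act (orbMap K R act ⁻¹' V) ∧
        orbMap K R act '' (orbMap K R act ⁻¹' V) = V) := by
  have hsat : ∀ Z : Set (PrimeSpectrum R), IsClosed Z → GLStable K R act Z →
      orbMap K R act ⁻¹' (orbMap K R act '' Z) = Z :=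
    fun Z h1 h2 => saturated_of_closed_stable h2 h1
  have hstab : ∀ C : Set (OrbSpace K R act), GLStable K R act (orbMap K R act ⁻¹' C) := by
    intro C g hg
    ext x
    simp only [Set.mem_preimage, Function.comp]
    have : orbMap K R act (pt K R act g x) = orbMap K R act x :=
      Quotient.sound (orbitClosure_pt halg hg x)
    rw [this]
  have hsurj : Function.Surjective (orbMap K R act) := Quot.exists_rep
  refine ⟨?_, ?_, ?_, ?_⟩
  · intro Z h1 h2
    refine ⟨?_, hsat Z h1 h2⟩
    rw [← isQuotientMap_orbMap.isClosed_preimage, hsat Z h1 h2]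
    exact h1
  · intro C hC
    exact ⟨hC.preimage isQuotientMap_orbMap.continuous, hstab C,
      Set.image_preimage_eq C hsurj⟩
  · intro U h1 h2
    have h2c : GLStable K R act Uᶜ := by
      intro g hg
      rw [Set.preimage_compl, h2 g hg]
    have hUc := hsat Uᶜ h1.isClosed_compl h2c
    have hUsat : orbMap K R act ⁻¹' (orbMap K R act '' U) = U := by
      apply Set.Subset.antisymm
      · rintro y ⟨x, hxU, hxy⟩
        by_contra hyU
        have : x ∈ Uᶜ := by
          rw [← hUc]
          exact ⟨y, hyU, hxy.symm⟩
        exact this hxU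
      · exact Set.subset_preimage_image _ _
    refine ⟨?_, hUsat⟩
    rw [← isQuotientMap_orbMap.isOpen_preimage, hUsat]
    exact h1
  · intro V hV
    exact ⟨hV.preimage isQuotientMap_orbMap.continuous, hstab V,
      Set.image_preimage_eq V hsurj⟩
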